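/- Let a₊, a₋ > 0 and γ ≤ -3. Then lim_{ρ → +∞} F₂(ρ) = +∞, where F₂(ρ) = ρ^{(γ-1)/(2(γ+1))} · I₁(ρ)/I₂(ρ) on ]a₋/a₊, +∞[. -/

import Mathlib

/-!
Both integrands are nonnegative, and their singularities `|1 - ξ|^(-1/2)`, `|a₋ ξ - a₊|^(-1/2)`
are integrable. For large `ρ` the lower limit of `I₁` exceeds `2` and the upper limit of `I₂` lies
in `[a₊/(a₊+a₋), a₊/a₋[`, so `I₁(ρ) ≤ -∫₁² < 0` and `-∫_{a₊/(a₊+a₋)}^{a₊/a₋} ≤ I₂(ρ) < 0`.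
Hence `I₁/I₂` is eventually bounded below by a positive constant, while the exponent
`(γ-1)/(2(γ+1))` is positive for `γ < -1`.
-/

open Set MeasureTheory intervalIntegral Filter Topology

lemma intervalIntegrable_abs_rpow {r : ℝ} (hr : -1 < r) (a b : ℝ) :
    IntervalIntegrable (fun x : ℝ => |x| ^ r) volume a b := by
  have hpos : IntervalIntegrable (fun x : ℝ => x ^ r) volume a b := intervalIntegrable_rpow' hr
  have hneg : IntervalIntegrable (fun x : ℝ => (-x) ^ r) volume a b := by
    simpa using
      (IntervalIntegrable.iff_comp_neg (a := -a) (b := -b)).mp (intervalIntegrable_rpow' hr)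
  refine (hpos.norm.add hneg.norm).mono_fun'
    (by fun_prop : Measurable fun x : ℝ => |x| ^ r).aestronglyMeasurable
    (ae_of_all _ fun x => ?_)
  dsimp only
  rw [Real.norm_of_nonneg (by positivity)]
  rcases le_total 0 x with hx | hx
  · rw [abs_of_nonneg hx, Real.norm_of_nonneg (by positivity)]
    exact le_add_of_nonneg_right (norm_nonneg _)
  · rw [abs_of_nonpos hx, Real.norm_of_nonneg (Real.rpow_nonneg (neg_nonneg.mpr hx) r)]
    exact le_add_of_nonneg_left (norm_nonneg _)

lemma intervalIntegrable_abs_mul_sub_rpow {r : ℝ} (hr : -1 < r) (m d a b : ℝ) :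
    IntervalIntegrable (fun x : ℝ => |m * x - d| ^ r) volume a b := by
  rcases eq_or_ne m 0 with rfl | hm
  · simp
  simpa [hm] using
    ((intervalIntegrable_abs_rpow hr (m * a - d) (m * b - d)).comp_sub_right d).comp_mul_left
      (c := m)

lemma intervalIntegrable_abs_mul_sub_rpow_mul_abs_rpow {r : ℝ} (hr : -1 < r) (m d e : ℝ)
    {a b : ℝ} (hab : (0 : ℝ) ∉ uIcc a b) :
    IntervalIntegrable (fun x : ℝ => |m * x - d| ^ r * |x| ^ e) volume a b :=
  (intervalIntegrable_abs_mul_sub_rpow hr m d a b).mul_continuousOn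
    (continuous_abs.continuousOn.rpow_const fun _ hx =>
      Or.inl (abs_ne_zero.mpr (ne_of_mem_of_not_mem hx hab)))

section TimeMap

variable {ap am : ℝ} (e : ℝ)

lemma integral_timeMap₁_pos (hap : ap ≠ 0) :
    0 < ∫ ξ in (1 : ℝ)..2, |ap - ap * ξ| ^ (-(1 : ℝ) / 2) * |ξ| ^ e := by
  refine intervalIntegral_pos_of_pos_on ?_ (fun ξ hξ => ?_) one_lt_two
  · simpa only [abs_sub_comm ap] using intervalIntegrable_abs_mul_sub_rpow_mul_abs_rpow
      (by norm_num) ap ap e (notMem_uIcc_of_lt one_pos two_pos)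
  · have h₁ : ap - ap * ξ ≠ 0 := by
      rw [← mul_one_sub]
      exact mul_ne_zero hap (by linarith [hξ.1])
    have h₂ : ξ ≠ 0 := by linarith [hξ.1]
    positivity

lemma integral_timeMap₁_le {c : ℝ} (hc : 2 ≤ c) :
    ∫ ξ in c..1, |ap - ap * ξ| ^ (-(1 : ℝ) / 2) * |ξ| ^ e ≤
      -∫ ξ in (1 : ℝ)..2, |ap - ap * ξ| ^ (-(1 : ℝ) / 2) * |ξ| ^ e := by
  rw [integral_symm, neg_le_neg_iff]
  refine integral_mono_interval le_rfl one_le_two hc (ae_of_all _ fun ξ => by positivity) ?_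
  simpa only [abs_sub_comm ap] using intervalIntegrable_abs_mul_sub_rpow_mul_abs_rpow
    (by norm_num) ap ap e (notMem_uIcc_of_lt one_pos (by linarith))

lemma integral_timeMap₂_pos (ham : 0 < am) {x : ℝ} (hx : 0 < x) (hxq : x < ap / am) :
    0 < ∫ ξ in x..ap / am, |am * ξ - ap| ^ (-(1 : ℝ) / 2) * |ξ| ^ e := by
  refine intervalIntegral_pos_of_pos_on ?_ (fun ξ hξ => ?_) hxq
  · exact intervalIntegrable_abs_mul_sub_rpow_mul_abs_rpow (by norm_num) am ap e
      (notMem_uIcc_of_lt hx (hx.trans hxq))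
  · have h₁ : am * ξ - ap ≠ 0 := by
      have := (lt_div_iff₀' ham).mp hξ.2
      linarith
    have h₂ : ξ ≠ 0 := by linarith [hξ.1]
    positivity

lemma integral_timeMap₂_le {b x : ℝ} (hb : 0 < b) (hbx : b ≤ x) (hxq : x ≤ ap / am) :
    ∫ ξ in x..ap / am, |am * ξ - ap| ^ (-(1 : ℝ) / 2) * |ξ| ^ e ≤
      ∫ ξ in b..ap / am, |am * ξ - ap| ^ (-(1 : ℝ) / 2) * |ξ| ^ e :=
  integral_mono_interval hbx hxq le_rfl (ae_of_all _ fun ξ => by positivity)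
    (intervalIntegrable_abs_mul_sub_rpow_mul_abs_rpow (by norm_num) am ap e
      (notMem_uIcc_of_lt hb (hb.trans_le (hbx.trans hxq))))

end TimeMap

lemma tendsto_mul_add_one_div_atTop {a b : ℝ} (ha : 0 < a) (hb : 0 < b) :
    Tendsto (fun ρ : ℝ => a * (ρ + 1) / b) atTop atTop :=
  ((tendsto_atTop_add_const_right _ 1 tendsto_id).const_mul_atTop ha).atTop_div_const hb

lemma tendsto_mul_add_one_div_self (b : ℝ) :
    Tendsto (fun ρ : ℝ => b * ((ρ + 1) / ρ)) atTop (𝓝 b) := by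
  have h : Tendsto (fun ρ : ℝ => 1 + ρ⁻¹) atTop (𝓝 1) := by
    simpa using tendsto_inv_atTop_zero.const_add (1 : ℝ)
  have : Tendsto (fun ρ : ℝ => (ρ + 1) / ρ) atTop (𝓝 1) :=
    h.congr' ((eventually_ne_atTop 0).mono fun ρ hρ => by field_simp)
  simpa using this.const_mul b

lemma div_le_div_of_le_neg_of_neg_le {u v c C : ℝ} (hc : 0 < c) (hu : u ≤ -c) (hCv : -C ≤ v)
    (hv : v < 0) : c / C ≤ u / v := by
  rw [← neg_div_neg_eq u v]
  exact div_le_div₀ (by linarith) (by linarith) (by linarith) (by linarith)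

lemma tendsto_rpow_mul_atTop_of_eventually_le {p c : ℝ} (hp : 0 < p) (hc : 0 < c) {g : ℝ → ℝ}
    (hg : ∀ᶠ ρ in atTop, c ≤ g ρ) : Tendsto (fun ρ => ρ ^ p * g ρ) atTop atTop := by
  refine tendsto_atTop_mono' _ ?_ ((tendsto_rpow_atTop hp).atTop_mul_const hc)
  filter_upwards [hg, eventually_ge_atTop 0] with ρ hgρ hρ
  exact mul_le_mul_of_nonneg_left hgρ (Real.rpow_nonneg hρ p)

/-- for `γ ≤ -3`, `F₂(ρ) → +∞` as `ρ → +∞`. -/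
theorem stmt_7 (ap am γ : ℝ) (hap : 0 < ap) (ham : 0 < am) (hγ : γ ≤ -3)
    (I₁ I₂ F₂ : ℝ → ℝ)
    (hI₁ : ∀ ρ : ℝ, I₁ ρ =
      ∫ ξ in (ap * (ρ + 1) / (ap + am))..1,
        |ap - ap * ξ| ^ (-(1 : ℝ) / 2) * |ξ| ^ (-(γ / (γ + 1))))
    (hI₂ : ∀ ρ : ℝ, I₂ ρ =
      ∫ ξ in (ap / am)..(ap / (ap + am) * ((ρ + 1) / ρ)),
        |am * ξ - ap| ^ (-(1 : ℝ) / 2) * |ξ| ^ (-(γ / (γ + 1))))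
    (hF₂ : ∀ ρ : ℝ, F₂ ρ = ρ ^ ((γ - 1) / (2 * (γ + 1))) * (I₁ ρ / I₂ ρ)) :
    Tendsto F₂ atTop atTop := by
  set e := -(γ / (γ + 1))
  have hp : 0 < (γ - 1) / (2 * (γ + 1)) := div_pos_of_neg_of_neg (by linarith) (by linarith)
  have hb : 0 < ap / (ap + am) := by positivity
  have hbq : ap / (ap + am) < ap / am := div_lt_div_of_pos_left hap ham (by linarith)
  obtain ⟨c, hc, hratio⟩ : ∃ c > 0, ∀ᶠ ρ in atTop, c ≤ I₁ ρ / I₂ ρ := by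
    refine ⟨_, div_pos (integral_timeMap₁_pos e hap.ne') (integral_timeMap₂_pos e ham hb hbq), ?_⟩
    filter_upwards [(tendsto_mul_add_one_div_atTop hap (add_pos hap ham)).eventually_ge_atTop 2,
      (tendsto_mul_add_one_div_self _).eventually_lt_const hbq, eventually_gt_atTop 0]
      with ρ h₁ h₂ hρ
    have hbρ : ap / (ap + am) ≤ ap / (ap + am) * ((ρ + 1) / ρ) :=
      le_mul_of_one_le_right hb.le ((one_le_div hρ).mpr (by linarith))
    rw [hI₁, hI₂, integral_symm _ (ap / am)]
    exact div_le_div_of_le_neg_of_neg_le (integral_timeMap₁_pos e hap.ne')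
      (integral_timeMap₁_le e h₁) (neg_le_neg (integral_timeMap₂_le e hb hbρ h₂.le))
      (neg_neg_of_pos (integral_timeMap₂_pos e ham (hb.trans_le hbρ) h₂))
  rw [show F₂ = _ from funext hF₂]
  exact tendsto_rpow_mul_atTop_of_eventually_le hp hc hratio
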